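/- For any finite set Γ of propositional formulas and any probability distribution P on formulas (a function assigning 0 to ⊥, satisfying P(¬φ) = 1 − P(φ), and finitely additive over classically inconsistent disjuncts), there exists a finite probabilistic model (a finite set W of worlds, a classical valuation of atoms at each world, and a probability measure on subsets of W) such that the induced probability of every γ ∈ Γ equals P(γ). -/

import Mathlib

/-- Propositional formulas: atoms, negation, disjunction. -/
inductive Fml : Type
  | atom : ℕ → Fml
  | neg : Fml → Fml
  | or : Fml → Fml → Fml
deriving DecidableEq

namespace Fml

def and (φ ψ : Fml) : Fml := neg (or (neg φ) (neg ψ))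

def bot : Fml := and (atom 0) (neg (atom 0))

def imp (φ ψ : Fml) : Fml := or (neg φ) ψ

def eval (v : ℕ → Bool) : Fml → Bool
  | atom n => v n
  | neg φ => !(eval v φ)
  | or φ ψ => (eval v φ) || (eval v ψ)

end Fml

/-- Two formulas are jointly classically unsatisfiable. -/
def Incompatible (φ ψ : Fml) : Prop :=
  ∀ v : ℕ → Bool, ¬(φ.eval v = true ∧ ψ.eval v = true)

/-- Classical (Set-Set) validity. -/
def ClValid (Γ Δ : Finset Fml) : Prop :=
  ∀ v : ℕ → Bool, (∀ γ ∈ Γ, γ.eval v = true) → ∃ δ ∈ Δ, δ.eval v = true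

/-- Classical single-conclusion entailment. -/
def ClEntails (Γ : Finset Fml) (φ : Fml) : Prop :=
  ∀ v : ℕ → Bool, (∀ γ ∈ Γ, γ.eval v = true) → φ.eval v = true

def ClConsistent (Γ : Finset Fml) : Prop :=
  ∃ v : ℕ → Bool, ∀ γ ∈ Γ, γ.eval v = true

def Tautology (φ : Fml) : Prop := ∀ v : ℕ → Bool, φ.eval v = true

/-- A probability distribution on formulas. -/
structure ProbDist where
  p : Fml → ℝ
  nonneg : ∀ φ, 0 ≤ p φ
  le_one : ∀ φ, p φ ≤ 1
  bot_eq : p Fml.bot = 0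
  neg_eq : ∀ φ, p (Fml.neg φ) = 1 - p φ
  add_eq : ∀ φ ψ, Incompatible φ ψ → p (Fml.or φ ψ) = p φ + p ψ

/-- A probabilistic model: worlds with classical valuations and a finitely
additive probability measure on subsets of worlds. -/
structure PModel where
  W : Type
  nonempty : Nonempty W
  val : W → ℕ → Bool
  μ : Set W → ℝ
  nonneg : ∀ A : Set W, 0 ≤ μ A
  empty_eq : μ (∅ : Set W) = 0
  univ_eq : μ (Set.univ : Set W) = 1
  add_eq : ∀ A B : Set W, Disjoint A B → μ (A ∪ B) = μ A + μ B

/-- Denotation of a formula in a model. -/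
def PModel.den (M : PModel) (φ : Fml) : Set M.W := {w | φ.eval (M.val w) = true}

/-- Induced probability of a formula in a model. -/
def PModel.prob (M : PModel) (φ : Fml) : ℝ := M.μ (M.den φ)

/-- An upset of [0,1]: contains 1, excludes 0, upward closed within [0,1]. -/
def IsUpset (α : Set ℝ) : Prop :=
  α ⊆ Set.Icc 0 1 ∧ (1 : ℝ) ∈ α ∧ (0 : ℝ) ∉ α ∧
    ∀ x ∈ α, ∀ y ∈ Set.Icc (0:ℝ) 1, x ≤ y → y ∈ α

/-- The mirror image of α. -/
def mirror (α : Set ℝ) : Set ℝ := {x ∈ Set.Icc (0:ℝ) 1 | 1 - x ∈ α}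

/-- The dual of α. -/
def dual (α : Set ℝ) : Set ℝ := Set.Icc (0:ℝ) 1 \ mirror α

/-- Conjunction of a finite set of formulas. -/
noncomputable def conj (Γ : Finset Fml) : Fml := Γ.toList.foldr Fml.and (Fml.neg Fml.bot)

/-- Disjunction of a finite set of formulas. -/
noncomputable def disj (Δ : Finset Fml) : Fml := Δ.toList.foldr Fml.or Fml.bot

/-- Disjunction of a list of formulas. -/
def disjList (l : List Fml) : Fml := l.foldr Fml.or Fml.bot

/-- α-preservation validity (over probability distributions). -/
def PresValid (α : Set ℝ) (Γ Δ : Finset Fml) : Prop :=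
  ∀ P : ProbDist, (∀ γ ∈ Γ, P.p γ ∈ α) → ∃ δ ∈ Δ, P.p δ ∈ α

/-- α-preservation validity (over probabilistic models). -/
def PresValidM (α : Set ℝ) (Γ Δ : Finset Fml) : Prop :=
  ∀ M : PModel, (∀ γ ∈ Γ, M.prob γ ∈ α) → ∃ δ ∈ Δ, M.prob δ ∈ α

/-- α-symmetric validity. -/
def SymValid (α : Set ℝ) (Γ Δ : Finset Fml) : Prop :=
  ∀ P : ProbDist, (∀ γ ∈ Γ, P.p γ ∈ α) → ∃ δ ∈ Δ, P.p δ ∉ mirror α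

/-- α-satisfiability of a finite set of formulas. -/
def Satis (α : Set ℝ) (Γ : Finset Fml) : Prop :=
  ∃ P : ProbDist, ∀ γ ∈ Γ, P.p γ ∈ α

/-! Restrict attention to the finitely many atoms occurring in `Γ`, say those below `N`. The
`2 ^ N` state descriptions (conjunctions of literals) are pairwise incompatible and their
disjunction is a tautology, so the weights `P (state w)` form a probability vector on the
valuations `w : Fin N → Bool`. Every `γ ∈ Γ` is classically equivalent to the disjunction of the
states that satisfy it, so additivity of `P` gives `P γ = ∑_{w ⊨ γ} P (state w)`. -/

namespace Fml

@[simp] lemma eval_atom (v : ℕ → Bool) (n : ℕ) : (Fml.atom n).eval v = v n := rfl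

@[simp] lemma eval_neg (v : ℕ → Bool) (φ : Fml) : (Fml.neg φ).eval v = !φ.eval v := rfl

@[simp] lemma eval_or (v : ℕ → Bool) (φ ψ : Fml) :
    (Fml.or φ ψ).eval v = (φ.eval v || ψ.eval v) := rfl

@[simp] lemma eval_and (v : ℕ → Bool) (φ ψ : Fml) :
    (Fml.and φ ψ).eval v = (φ.eval v && ψ.eval v) := by
  simp [Fml.and]

@[simp] lemma eval_bot (v : ℕ → Bool) : Fml.bot.eval v = false := by
  simp [Fml.bot]

/-- One more than the largest atom index occurring in the formula. -/
def atomBound : Fml → ℕ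
  | Fml.atom n => n + 1
  | Fml.neg φ => atomBound φ
  | Fml.or φ ψ => max (atomBound φ) (atomBound ψ)

lemma eval_congr {φ : Fml} {v w : ℕ → Bool} (h : ∀ n < φ.atomBound, v n = w n) :
    φ.eval v = φ.eval w := by
  induction φ with
  | atom n => exact h n n.lt_succ_self
  | neg φ ih => simp [ih h]
  | or φ ψ ihφ ihψ =>
    simp only [eval_or]
    rw [ihφ fun n hn => h n (lt_max_of_lt_left hn), ihψ fun n hn => h n (lt_max_of_lt_right hn)]

def conjList (l : List Fml) : Fml := l.foldr Fml.and (Fml.neg Fml.bot)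

lemma eval_conjList (l : List Fml) (v : ℕ → Bool) :
    (conjList l).eval v = l.all (·.eval v) := by
  induction l with
  | nil => simp [conjList]
  | cons φ l ih => simp_all [conjList]

end Fml

lemma eval_disjList (l : List Fml) (v : ℕ → Bool) :
    (disjList l).eval v = l.any (·.eval v) := by
  induction l with
  | nil => simp [disjList]
  | cons φ l ih => simp_all [disjList]

namespace ProbDist

variable (P : ProbDist)

lemma p_mono {φ ψ : Fml} (h : ∀ v, φ.eval v = true → ψ.eval v = true) : P.p φ ≤ P.p ψ := by
  have hinc : Incompatible φ (Fml.neg ψ) := fun v ⟨hφ, hψ⟩ => by simp [h v hφ] at hψ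
  have := P.le_one (Fml.or φ (Fml.neg ψ))
  rw [P.add_eq _ _ hinc, P.neg_eq] at this
  linarith

lemma p_congr {φ ψ : Fml} (h : ∀ v, φ.eval v = ψ.eval v) : P.p φ = P.p ψ :=
  (P.p_mono fun v hv => h v ▸ hv).antisymm (P.p_mono fun v hv => (h v).symm ▸ hv)

lemma p_eq_zero_of_unsat {φ : Fml} (h : ∀ v, φ.eval v = false) : P.p φ = 0 := by
  have hadd := P.add_eq φ φ fun v ⟨hφ, _⟩ => by simp [h v] at hφ
  rw [P.p_congr (ψ := φ) fun v => by simp] at hadd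
  linarith

lemma p_eq_one_of_tautology {φ : Fml} (h : Tautology φ) : P.p φ = 1 := by
  have := P.neg_eq φ
  rw [P.p_eq_zero_of_unsat fun v => by simp [h v]] at this
  linarith

lemma p_disjList {l : List Fml} (h : l.Pairwise Incompatible) :
    P.p (disjList l) = (l.map P.p).sum := by
  induction l with
  | nil => exact P.bot_eq
  | cons φ l ih =>
    obtain ⟨hφ, hl⟩ := List.pairwise_cons.mp h
    have hinc : Incompatible φ (disjList l) := fun v ⟨h₁, h₂⟩ => by
      obtain ⟨ψ, hψ, h₂⟩ := List.any_eq_true.mp ((eval_disjList l v).symm.trans h₂)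
      exact hφ ψ hψ v ⟨h₁, h₂⟩
    rw [List.map_cons, List.sum_cons, ← ih hl]
    exact P.add_eq φ _ hinc

end ProbDist

section States

variable {N : ℕ}

def truncate (N : ℕ) (v : ℕ → Bool) : Fin N → Bool := fun j => v j

def extendByFalse (w : Fin N → Bool) : ℕ → Bool := fun n => if h : n < N then w ⟨n, h⟩ else false

lemma eval_extendByFalse_truncate {φ : Fml} (hφ : φ.atomBound ≤ N) (v : ℕ → Bool) :
    φ.eval (extendByFalse (truncate N v)) = φ.eval v :=
  Fml.eval_congr fun n hn => by simp [extendByFalse, truncate, hn.trans_le hφ]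

def literal (w : Fin N → Bool) (j : Fin N) : Fml :=
  if w j then Fml.atom j else Fml.neg (Fml.atom j)

lemma eval_literal (w : Fin N → Bool) (j : Fin N) (v : ℕ → Bool) :
    (literal w j).eval v = true ↔ v j = w j := by
  unfold literal
  cases w j <;> simp

def state (w : Fin N → Bool) : Fml := Fml.conjList ((List.finRange N).map (literal w))

lemma eval_state (w : Fin N → Bool) (v : ℕ → Bool) :
    (state w).eval v = true ↔ truncate N v = w := by
  simp [state, Fml.eval_conjList, eval_literal, funext_iff, truncate]

lemma incompatible_state {w w' : Fin N → Bool} (h : w ≠ w') :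
    Incompatible (state w) (state w') := fun v ⟨h₁, h₂⟩ =>
  h (((eval_state w v).mp h₁).symm.trans ((eval_state w' v).mp h₂))

noncomputable def stateDisj (S : Finset (Fin N → Bool)) : Fml :=
  disjList (S.toList.map state)

lemma eval_stateDisj (S : Finset (Fin N → Bool)) (v : ℕ → Bool) :
    (stateDisj S).eval v = true ↔ truncate N v ∈ S := by
  simp [stateDisj, eval_disjList, eval_state]

lemma ProbDist.p_stateDisj (P : ProbDist) (S : Finset (Fin N → Bool)) :
    P.p (stateDisj S) = ∑ w ∈ S, P.p (state w) := by
  have hpw : (S.toList.map state).Pairwise Incompatible :=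
    List.pairwise_map.mpr (S.nodup_toList.imp incompatible_state)
  rw [stateDisj, P.p_disjList hpw, List.map_map, ← Finset.sum_map_toList]
  rfl

lemma ProbDist.sum_p_state (P : ProbDist) (N : ℕ) :
    ∑ w : Fin N → Bool, P.p (state w) = 1 := by
  rw [← P.p_stateDisj]
  exact P.p_eq_one_of_tautology fun v => (eval_stateDisj _ v).mpr (Finset.mem_univ _)

lemma ProbDist.p_eq_sum_p_state (P : ProbDist) {φ : Fml} (hφ : φ.atomBound ≤ N) :
    P.p φ = ∑ w : Fin N → Bool with φ.eval (extendByFalse w), P.p (state w) := by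
  rw [← P.p_stateDisj]
  refine P.p_congr fun v => Bool.eq_iff_iff.mpr ?_
  simp [eval_stateDisj, eval_extendByFalse_truncate hφ]

end States

/-- every probability distribution agrees, on any finite set Γ of
formulas, with the probabilities induced by some finite probabilistic model. -/
theorem stmt0 (Γ : Finset Fml) (P : ProbDist) :
    ∃ (k : ℕ) (_ : 0 < k) (val : Fin k → ℕ → Bool) (μ : Fin k → ℝ),
      (∀ i, 0 ≤ μ i) ∧ (∑ i, μ i) = 1 ∧
      ∀ γ ∈ Γ, (∑ i, if γ.eval (val i) = true then μ i else 0) = P.p γ := by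
  classical
  let N := Γ.sup Fml.atomBound
  let e := Fintype.equivFin (Fin N → Bool)
  refine ⟨_, Fintype.card_pos, fun i => extendByFalse (e.symm i), fun i => P.p (state (e.symm i)),
    fun _ => P.nonneg _, ?_, fun γ hγ => ?_⟩
  · rw [e.symm.sum_comp fun w => P.p (state w)]
    exact P.sum_p_state N
  · rw [e.symm.sum_comp fun w => if γ.eval (extendByFalse w) then P.p (state w) else 0,
      ← Finset.sum_filter, P.p_eq_sum_p_state (Finset.le_sup hγ)]
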